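/- arXiv:1503.04964 — 2 statements merged into one kernel-verified Lean document; each statement's English description precedes it below -/
import Mathlib

section
/- The Bellman operator for the energy-sharing MDP preserves monotonicity in the data buffer: if H : S → ℝ satisfies H(q,E) ≤ H(q^L,E) for all q ≤ q^L ≤ D_MAX and all E, then L H also satisfies (L H)(q,E) ≤ (L H)(q^L,E) for all q ≤ q^L, where (L H)(q,E) = min_{T ∈ A(E)} ( (q - g(T))⁺ + ∑_{x,y} P(x)Q(y)·H( min((q-g(T))⁺ + x, D_MAX), min(E - T + y, E_MAX) ) ) - (L H)(q_r,E_r). -/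
open Finset

/- Each action's cost-to-go is monotone in the data backlog: the holding cost `(q - g(T))⁺`
is monotone by hypothesis, and the expected future cost is a nonnegatively weighted sum of
values of `H`, taken at next backlogs `min ((q - g(T))⁺ + x) D_MAX` that are monotone in `q`.
Minimising over the actions and subtracting the constant `(L H)(q_r, E_r)` preserves this. -/

theorem monotone_expectedCost {Xs Ys : Finset ℕ} {P Q : ℕ → ℝ}
    (hP0 : ∀ x, 0 ≤ P x) (hQ0 : ∀ y, 0 ≤ Q y) {H : ℕ × ℕ → ℝ}
    (hH : ∀ E, Monotone fun q => H (q, E)) (DMAX : ℕ) (nextE : ℕ → ℕ) :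
    Monotone fun a : ℕ => ∑ x ∈ Xs, ∑ y ∈ Ys, P x * Q y * H (min (a + x) DMAX, nextE y) :=
  fun _ _ hab => sum_le_sum fun x _ => sum_le_sum fun y _ =>
    mul_le_mul_of_nonneg_left (hH _ (min_le_min_right _ (Nat.add_le_add_right hab x)))
      (mul_nonneg (hP0 x) (hQ0 y))

theorem stmt11 (DMAX EMAX : ℕ)
    (f : ℕ → ℕ → ℕ)  -- f q T = (q - g(T))⁺ truncated to {0,...,DMAX}
    (hf : ∀ T, Monotone fun q => f q T)
    (Xs Ys : Finset ℕ)
    (P Q : ℕ → ℝ) (hP0 : ∀ x, 0 ≤ P x) (hQ0 : ∀ y, 0 ≤ Q y)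
    (qr Er : ℕ)
    (H : ℕ × ℕ → ℝ)
    (hH : ∀ E, Monotone fun q => H (q, E))
    (LH : ℕ → ℕ → ℝ)
    (hLH : ∀ q E, LH q E =
      ((range (E + 1)).inf' (by simp) fun T =>
        (f q T : ℝ) + ∑ x ∈ Xs, ∑ y ∈ Ys, P x * Q y *
          H (min (f q T + x) DMAX, min (E - T + y) EMAX)) -
      ((range (Er + 1)).inf' (by simp) fun T =>
        (f qr T : ℝ) + ∑ x ∈ Xs, ∑ y ∈ Ys, P x * Q y *
          H (min (f qr T + x) DMAX, min (Er - T + y) EMAX))) :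
    ∀ q qL E : ℕ, q ≤ qL → LH q E ≤ LH qL E := by
  intro q qL E hq
  have hcost (T : ℕ) : Monotone fun q => (f q T : ℝ) + ∑ x ∈ Xs, ∑ y ∈ Ys, P x * Q y *
      H (min (f q T + x) DMAX, min (E - T + y) EMAX) :=
    (Nat.mono_cast.comp (hf T)).add
      ((monotone_expectedCost hP0 hQ0 hH DMAX fun y => min (E - T + y) EMAX).comp (hf T))
  rw [hLH, hLH]
  exact sub_le_sub_right (inf'_mono_fun fun T _ => hcost T hq) _
end

section
/- The Bellman operator preserves monotonicity (nonincreasing) in the energy buffer: if H : S → ℝ satisfies H(q,E) ≥ H(q,E^L) whenever E ≤ E^L, then L H satisfies (L H)(q,E) ≥ (L H)(q,E^L) whenever E ≤ E^L, using that A(E) ⊆ A(E^L) and that the next energy state E - T + y is monotone in E for fixed T. -/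
/-! For a fixed action `T`, the next energy state `min (E - T + y) EMAX` is monotone in `E`, so the
expected cost-to-go is antitone in `E` (the weights `P x * Q y` are nonnegative). Since the action
set `{0, …, E}` grows with `E`, the minimum over it is antitone as well; the reference term does
not depend on `E`. -/

open Finset

lemma antitone_finset_sum {ι α β : Type*} [Preorder α] [AddCommMonoid β] [PartialOrder β]
    [IsOrderedAddMonoid β] {s : Finset ι} {h : ι → α → β} (hh : ∀ i ∈ s, Antitone (h i)) :
    Antitone fun a => ∑ i ∈ s, h i a :=
  fun _ _ hab => sum_le_sum fun i hi => hh i hi hab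

lemma antitone_inf'_range_succ {α : Type*} [SemilatticeInf α] {c : ℕ → ℕ → α}
    (hc : ∀ T, Antitone fun E => c E T) :
    Antitone fun E => (range (E + 1)).inf' nonempty_range_add_one (c E) := by
  intro E EL hE
  refine le_inf' _ _ fun T hT => ?_
  have hT' : T ∈ range (EL + 1) := range_subset_range.2 (by omega) hT
  exact (inf'_le _ hT').trans (hc T hE)

lemma monotone_sub_add_min (T y EMAX : ℕ) : Monotone fun E => min (E - T + y) EMAX :=
  fun _ _ hE => min_le_min_right _ (by omega)

theorem stmt12 (DMAX EMAX : ℕ)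
    (f : ℕ → ℕ → ℕ)  -- f q T = (q - g(T))⁺ truncated to {0,...,DMAX}
    (Xs Ys : Finset ℕ)
    (P Q : ℕ → ℝ) (hP0 : ∀ x, 0 ≤ P x) (hQ0 : ∀ y, 0 ≤ Q y)
    (qr Er : ℕ)
    (H : ℕ × ℕ → ℝ)
    (hH : ∀ q, Antitone fun E => H (q, E))
    (LH : ℕ → ℕ → ℝ)
    (hLH : ∀ q E, LH q E =
      ((range (E + 1)).inf' (by simp) fun T =>
        (f q T : ℝ) + ∑ x ∈ Xs, ∑ y ∈ Ys, P x * Q y *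
          H (min (f q T + x) DMAX, min (E - T + y) EMAX)) -
      ((range (Er + 1)).inf' (by simp) fun T =>
        (f qr T : ℝ) + ∑ x ∈ Xs, ∑ y ∈ Ys, P x * Q y *
          H (min (f qr T + x) DMAX, min (Er - T + y) EMAX))) :
    ∀ q E EL : ℕ, E ≤ EL → LH q EL ≤ LH q E := by
  intro q E EL hE
  rw [hLH, hLH]
  refine sub_le_sub_right (antitone_inf'_range_succ
    (c := fun E T => (f q T : ℝ) + ∑ x ∈ Xs, ∑ y ∈ Ys, P x * Q y *
      H (min (f q T + x) DMAX, min (E - T + y) EMAX)) (fun T => ?_) hE) _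
  refine Antitone.const_add (antitone_finset_sum fun x _ => antitone_finset_sum fun y _ => ?_) _
  exact ((hH _).comp_monotone (monotone_sub_add_min T y EMAX)).const_mul
    (mul_nonneg (hP0 x) (hQ0 y))
end
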